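/- Let D₇ = diag(2, 1, 1, 0, −1, −1, −2) (an element of g, obtained with ζ₁ = −1 and all other parameters 0), and for k ∈ ℤ let g_k = {X ∈ g : D₇X − XD₇ = kX}. Then g = g₋₃ ⊕ g₋₂ ⊕ g₋₁ ⊕ g₀ ⊕ g₁ ⊕ g₂ ⊕ g₃ with dim g_k = 2, 1, 2, 4, 2, 1, 2 for k = −3, −2, −1, 0, 1, 2, 3 respectively (in particular [g_p, g_q] ⊆ g_{p+q}), and the negatively graded part g₋₃ ⊕ g₋₂ ⊕ g₋₁ is isomorphic, as a graded Lie algebra, to g− (with g₋₁ ≅ span{e₁′, e₂′}, g₋₂ ≅ span{e₀}, g₋₃ ≅ span{e₁, e₂}). -/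
import Mathlib


noncomputable section

open Module

/-- The matrix of the Maurer–Cartan form of `G₂` in its 7-dimensional representation,
as a function of the 14 coframe parameters
`θ¹, θ², ω⁰, ω¹′, ω²′, γ¹₂, ζ₁, ζ₂, γ²₁, γ⁰₁, γ⁰₂, γ, γ₁, γ₂`. -/
def g2mat (t1 t2 w0 w1 w2 g12 z1 z2 g21 g01 g02 gm gam1 gam2 : ℝ) :
    Matrix (Fin 7) (Fin 7) ℝ :=
  !![-z2 - 2*z1, g02, -g01, -(Real.sqrt 2)*gm, gam2, gam1, 0;
     w2, -z2 - z1, -g21, -(Real.sqrt 2)*g01, gm, 0, -gam1;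
     -w1, -g12, -z1, -(Real.sqrt 2)*g02, 0, -gm, -gam2;
     (Real.sqrt 2)*w0, -(Real.sqrt 2)*w1, -(Real.sqrt 2)*w2, 0,
       (Real.sqrt 2)*g02, (Real.sqrt 2)*g01, (Real.sqrt 2)*gm;
     t2, -w0, 0, (Real.sqrt 2)*w2, z1, g21, g01;
     t1, 0, w0, (Real.sqrt 2)*w1, g12, z2 + z1, -g02;
     0, -t1, -t2, -(Real.sqrt 2)*w0, w1, -w2, z2 + 2*z1]

/-- The split exceptional Lie algebra `g₂ ⊆ Mat₇(ℝ)`, as the set of all matrices of the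
above form. -/
def g2Set : Set (Matrix (Fin 7) (Fin 7) ℝ) :=
  {X | ∃ t1 t2 w0 w1 w2 g12 z1 z2 g21 g01 g02 gm gam1 gam2 : ℝ,
    X = g2mat t1 t2 w0 w1 w2 g12 z1 z2 g21 g01 g02 gm gam1 gam2}

/-- The grading element `D₇ = diag(2,1,1,0,−1,−1,−2)`. -/
def D7 : Matrix (Fin 7) (Fin 7) ℝ := Matrix.diagonal ![2, 1, 1, 0, -1, -1, -2]

/-- The graded piece `g_k = {X ∈ g₂ : D₇X − XD₇ = kX}`. -/
def g2Level (k : ℤ) : Set (Matrix (Fin 7) (Fin 7) ℝ) :=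
  {X | X ∈ g2Set ∧ D7 * X - X * D7 = (k : ℝ) • X}

/-- The bracket of the (2,3,5) symbol algebra `g₋ = ℝ⁵`, in the basis
`e₁, e₂, e₀, e₁′, e₂′` (coordinates `0,…,4`). -/
def gBr (x y : Fin 5 → ℝ) : Fin 5 → ℝ :=
  ![3 * (x 2 * y 3 - x 3 * y 2), 3 * (x 2 * y 4 - x 4 * y 2),
    2 * (x 3 * y 4 - x 4 * y 3), 0, 0]

section helper
variable {α : Type*}
variable (a0 a1 a2 a3 a4 a5 a6 : α)
lemma vec7_0 : ![a0,a1,a2,a3,a4,a5,a6] 0 = a0 := rfl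
lemma vec7_1 : ![a0,a1,a2,a3,a4,a5,a6] 1 = a1 := rfl
lemma vec7_2 : ![a0,a1,a2,a3,a4,a5,a6] 2 = a2 := rfl
lemma vec7_3 : ![a0,a1,a2,a3,a4,a5,a6] 3 = a3 := rfl
lemma vec7_4 : ![a0,a1,a2,a3,a4,a5,a6] 4 = a4 := rfl
lemma vec7_5 : ![a0,a1,a2,a3,a4,a5,a6] 5 = a5 := rfl
lemma vec7_6 : ![a0,a1,a2,a3,a4,a5,a6] 6 = a6 := rfl
lemma vec5_0 : ![a0,a1,a2,a3,a4] 0 = a0 := rfl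
lemma vec5_1 : ![a0,a1,a2,a3,a4] 1 = a1 := rfl
lemma vec5_2 : ![a0,a1,a2,a3,a4] 2 = a2 := rfl
lemma vec5_3 : ![a0,a1,a2,a3,a4] 3 = a3 := rfl
lemma vec5_4 : ![a0,a1,a2,a3,a4] 4 = a4 := rfl

lemma ext7 {A B : Matrix (Fin 7) (Fin 7) α}
    (h00 : A 0 0 = B 0 0)
    (h01 : A 0 1 = B 0 1)
    (h02 : A 0 2 = B 0 2)
    (h03 : A 0 3 = B 0 3)
    (h04 : A 0 4 = B 0 4)
    (h05 : A 0 5 = B 0 5)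
    (h06 : A 0 6 = B 0 6)
    (h10 : A 1 0 = B 1 0)
    (h11 : A 1 1 = B 1 1)
    (h12 : A 1 2 = B 1 2)
    (h13 : A 1 3 = B 1 3)
    (h14 : A 1 4 = B 1 4)
    (h15 : A 1 5 = B 1 5)
    (h16 : A 1 6 = B 1 6)
    (h20 : A 2 0 = B 2 0)
    (h21 : A 2 1 = B 2 1)
    (h22 : A 2 2 = B 2 2)
    (h23 : A 2 3 = B 2 3)
    (h24 : A 2 4 = B 2 4)
    (h25 : A 2 5 = B 2 5)
    (h26 : A 2 6 = B 2 6)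
    (h30 : A 3 0 = B 3 0)
    (h31 : A 3 1 = B 3 1)
    (h32 : A 3 2 = B 3 2)
    (h33 : A 3 3 = B 3 3)
    (h34 : A 3 4 = B 3 4)
    (h35 : A 3 5 = B 3 5)
    (h36 : A 3 6 = B 3 6)
    (h40 : A 4 0 = B 4 0)
    (h41 : A 4 1 = B 4 1)
    (h42 : A 4 2 = B 4 2)
    (h43 : A 4 3 = B 4 3)
    (h44 : A 4 4 = B 4 4)
    (h45 : A 4 5 = B 4 5)
    (h46 : A 4 6 = B 4 6)
    (h50 : A 5 0 = B 5 0)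
    (h51 : A 5 1 = B 5 1)
    (h52 : A 5 2 = B 5 2)
    (h53 : A 5 3 = B 5 3)
    (h54 : A 5 4 = B 5 4)
    (h55 : A 5 5 = B 5 5)
    (h56 : A 5 6 = B 5 6)
    (h60 : A 6 0 = B 6 0)
    (h61 : A 6 1 = B 6 1)
    (h62 : A 6 2 = B 6 2)
    (h63 : A 6 3 = B 6 3)
    (h64 : A 6 4 = B 6 4)
    (h65 : A 6 5 = B 6 5)
    (h66 : A 6 6 = B 6 6) : A = B := by
  ext i j
  fin_cases i <;> fin_cases j <;> assumption
end helper

lemma g2mat_congr {at1 at2 aw0 aw1 aw2 ag12 az1 az2 ag21 ag01 ag02 agm agam1 agam2 bt1 bt2 bw0 bw1 bw2 bg12 bz1 bz2 bg21 bg01 bg02 bgm bgam1 bgam2 : ℝ}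
    (et1 : at1 = bt1)
    (et2 : at2 = bt2)
    (ew0 : aw0 = bw0)
    (ew1 : aw1 = bw1)
    (ew2 : aw2 = bw2)
    (eg12 : ag12 = bg12)
    (ez1 : az1 = bz1)
    (ez2 : az2 = bz2)
    (eg21 : ag21 = bg21)
    (eg01 : ag01 = bg01)
    (eg02 : ag02 = bg02)
    (egm : agm = bgm)
    (egam1 : agam1 = bgam1)
    (egam2 : agam2 = bgam2) :
    g2mat at1 at2 aw0 aw1 aw2 ag12 az1 az2 ag21 ag01 ag02 agm agam1 agam2 = g2mat bt1 bt2 bw0 bw1 bw2 bg12 bz1 bz2 bg21 bg01 bg02 bgm bgam1 bgam2 := by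
  subst_vars; rfl

set_option maxHeartbeats 4000000 in
lemma g2mat_add (at1 at2 aw0 aw1 aw2 ag12 az1 az2 ag21 ag01 ag02 agm agam1 agam2 bt1 bt2 bw0 bw1 bw2 bg12 bz1 bz2 bg21 bg01 bg02 bgm bgam1 bgam2 : ℝ) :
    g2mat at1 at2 aw0 aw1 aw2 ag12 az1 az2 ag21 ag01 ag02 agm agam1 agam2 + g2mat bt1 bt2 bw0 bw1 bw2 bg12 bz1 bz2 bg21 bg01 bg02 bgm bgam1 bgam2 =
    g2mat (at1+bt1) (at2+bt2) (aw0+bw0) (aw1+bw1) (aw2+bw2) (ag12+bg12) (az1+bz1) (az2+bz2) (ag21+bg21) (ag01+bg01) (ag02+bg02) (agm+bgm) (agam1+bgam1) (agam2+bgam2) := by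
  apply ext7 <;>
    (simp only [g2mat, Matrix.add_apply, Matrix.of_apply,
      vec7_0, vec7_1, vec7_2, vec7_3, vec7_4, vec7_5, vec7_6]; try ring)

set_option maxHeartbeats 4000000 in
lemma g2mat_smul (r : ℝ) (at1 at2 aw0 aw1 aw2 ag12 az1 az2 ag21 ag01 ag02 agm agam1 agam2 : ℝ) :
    r • g2mat at1 at2 aw0 aw1 aw2 ag12 az1 az2 ag21 ag01 ag02 agm agam1 agam2 = g2mat (r*at1) (r*at2) (r*aw0) (r*aw1) (r*aw2) (r*ag12) (r*az1) (r*az2) (r*ag21) (r*ag01) (r*ag02) (r*agm) (r*agam1) (r*agam2) := by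
  apply ext7 <;>
    (simp only [g2mat, Matrix.smul_apply, Matrix.of_apply, smul_eq_mul,
      vec7_0, vec7_1, vec7_2, vec7_3, vec7_4, vec7_5, vec7_6]; try ring)

lemma g2mat_zero : g2mat 0 0 0 0 0 0 0 0 0 0 0 0 0 0 = 0 := by
  apply ext7 <;>
    (simp only [g2mat, Matrix.zero_apply, Matrix.of_apply,
      vec7_0, vec7_1, vec7_2, vec7_3, vec7_4, vec7_5, vec7_6]; try ring)

lemma D7_eq : D7 = Matrix.of ![![2,0,0,0,0,0,0],![0,1,0,0,0,0,0],![0,0,1,0,0,0,0],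
    ![0,0,0,0,0,0,0],![0,0,0,0,-1,0,0],![0,0,0,0,0,-1,0],![0,0,0,0,0,0,-2]] := by
  apply ext7 <;> rfl

set_option maxHeartbeats 4000000 in
lemma D7_comm (at1 at2 aw0 aw1 aw2 ag12 az1 az2 ag21 ag01 ag02 agm agam1 agam2 : ℝ) :
    D7 * g2mat at1 at2 aw0 aw1 aw2 ag12 az1 az2 ag21 ag01 ag02 agm agam1 agam2 - g2mat at1 at2 aw0 aw1 aw2 ag12 az1 az2 ag21 ag01 ag02 agm agam1 agam2 * D7 =
    g2mat (-3*at1) (-3*at2) (-2*aw0) (-1*aw1) (-1*aw2) 0 0 0 0 (1*ag01) (1*ag02) (2*agm) (3*agam1) (3*agam2) := by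
  rw [D7_eq]
  apply ext7 <;>
    (simp only [g2mat, Matrix.sub_apply, Matrix.mul_apply, Fin.sum_univ_seven, Matrix.of_apply,
      vec7_0, vec7_1, vec7_2, vec7_3, vec7_4, vec7_5, vec7_6]; try ring)

set_option maxHeartbeats 16000000 in
lemma g2mat_bracket (xt1 xt2 xw0 xw1 xw2 xg12 xz1 xz2 xg21 xg01 xg02 xgm xgam1 xgam2 yt1 yt2 yw0 yw1 yw2 yg12 yz1 yz2 yg21 yg01 yg02 ygm ygam1 ygam2 : ℝ) :
    g2mat xt1 xt2 xw0 xw1 xw2 xg12 xz1 xz2 xg21 xg01 xg02 xgm xgam1 xgam2 * g2mat yt1 yt2 yw0 yw1 yw2 yg12 yz1 yz2 yg21 yg01 yg02 ygm ygam1 ygam2 - g2mat yt1 yt2 yw0 yw1 yw2 yg12 yz1 yz2 yg21 yg01 yg02 ygm ygam1 ygam2 * g2mat xt1 xt2 xw0 xw1 xw2 xg12 xz1 xz2 xg21 xg01 xg02 xgm xgam1 xgam2 =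
    g2mat (xg12*yt2 - yg12*xt2 - 3*xt1*yz1 - 2*xt1*yz2 + 3*yt1*xz1 + 2*yt1*xz2 - 3*xw0*yw1 + 3*yw0*xw1) (xg21*yt1 - yg21*xt1 - 3*xt2*yz1 - xt2*yz2 + 3*yt2*xz1 + yt2*xz2 - 3*xw0*yw2 + 3*yw0*xw2) (xg01*yt1 - yg01*xt1 + xg02*yt2 - yg02*xt2 - 2*xw0*yz1 - xw0*yz2 + 2*yw0*xz1 + yw0*xz2 - 2*xw1*yw2 + 2*yw1*xw2) (2*xg02*yw0 - 2*yg02*xw0 + xg12*yw2 - yg12*xw2 + xgm*yt1 - ygm*xt1 - xw1*yz1 - xw1*yz2 + yw1*xz1 + yw1*xz2) (-2*xg01*yw0 + 2*yg01*xw0 + xg21*yw1 - yg21*xw1 + xgm*yt2 - ygm*xt2 - xw2*yz1 + yw2*xz1) (-3*xg02*yw1 + 3*yg02*xw1 - xg12*yz2 + yg12*xz2 - xgam2*yt1 + ygam2*xt1) (xg01*yw1 - yg01*xw1 - 2*xg02*yw2 + 2*yg02*xw2 - xg12*yg21 + yg12*xg21 - xgam2*yt2 + ygam2*xt2 + xgm*yw0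 - ygm*xw0) (-3*xg01*yw1 + 3*yg01*xw1 + 3*xg02*yw2 - 3*yg02*xw2 + 2*xg12*yg21 - 2*yg12*xg21 - xgam1*yt1 + ygam1*xt1 + xgam2*yt2 - ygam2*xt2) (-3*xg01*yw2 + 3*yg01*xw2 + xg21*yz2 - yg21*xz2 - xgam1*yt2 + ygam1*xt2) (xg01*yz1 + xg01*yz2 - yg01*xz1 - yg01*xz2 + xg02*yg21 - yg02*xg21 - xgam1*yw0 + ygam1*xw0 - 2*xgm*yw2 + 2*ygm*xw2) (xg01*yg12 - yg01*xg12 + xg02*yz1 - yg02*xz1 - xgam2*yw0 + ygam2*xw0 + 2*xgm*yw1 - 2*ygm*xw1) (-2*xg01*yg02 + 2*yg01*xg02 - xgam1*yw1 + ygam1*xw1 - xgam2*yw2 + ygam2*xw2 + 2*xgm*yz1 + xgm*yz2 - 2*ygm*xz1 - ygm*xz2) (3*xg01*ygm - 3*yg01*xgm - xg21*ygam2 + yg21*xgam2 + 3*xgam1*yz1 + 2*xgam1*yz2 - 3*ygam1*xz1 - 2*ygam1*xz2) (3*xg02*ygm - 3*yg02*xgm - xg12*ygam1 + yg12*xgam1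 + 3*xgam2*yz1 + xgam2*yz2 - 3*ygam2*xz1 - ygam2*xz2) := by
  have sq2 : Real.sqrt 2 ^ 2 = 2 := Real.sq_sqrt (by norm_num)
  apply ext7 <;>
    (simp only [g2mat, Matrix.sub_apply, Matrix.mul_apply, Fin.sum_univ_seven, Matrix.of_apply,
      vec7_0, vec7_1, vec7_2, vec7_3, vec7_4, vec7_5, vec7_6];
     try ring_nf;
     try simp only [sq2];
     try ring)

lemma g2mat_inj {at1 at2 aw0 aw1 aw2 ag12 az1 az2 ag21 ag01 ag02 agm agam1 agam2 bt1 bt2 bw0 bw1 bw2 bg12 bz1 bz2 bg21 bg01 bg02 bgm bgam1 bgam2 : ℝ}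
    (h : g2mat at1 at2 aw0 aw1 aw2 ag12 az1 az2 ag21 ag01 ag02 agm agam1 agam2 = g2mat bt1 bt2 bw0 bw1 bw2 bg12 bz1 bz2 bg21 bg01 bg02 bgm bgam1 bgam2) :
    at1 = bt1 ∧ at2 = bt2 ∧ aw0 = bw0 ∧ aw1 = bw1 ∧ aw2 = bw2 ∧ ag12 = bg12 ∧ az1 = bz1 ∧ az2 = bz2 ∧ ag21 = bg21 ∧ ag01 = bg01 ∧ ag02 = bg02 ∧ agm = bgm ∧ agam1 = bgam1 ∧ agam2 = bgam2 := by
  have H : ∀ i j, g2mat at1 at2 aw0 aw1 aw2 ag12 az1 az2 ag21 ag01 ag02 agm agam1 agam2 i j = g2mat bt1 bt2 bw0 bw1 bw2 bg12 bz1 bz2 bg21 bg01 bg02 bgm bgam1 bgam2 i j := fun i j => by rw [h]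
  have Et1 := H 5 0
  simp only [g2mat, Matrix.of_apply, vec7_0, vec7_1, vec7_2, vec7_3, vec7_4, vec7_5, vec7_6] at Et1
  have Et2 := H 4 0
  simp only [g2mat, Matrix.of_apply, vec7_0, vec7_1, vec7_2, vec7_3, vec7_4, vec7_5, vec7_6] at Et2
  have Ew0 := H 5 2
  simp only [g2mat, Matrix.of_apply, vec7_0, vec7_1, vec7_2, vec7_3, vec7_4, vec7_5, vec7_6] at Ew0
  have Ew1 := H 6 4
  simp only [g2mat, Matrix.of_apply, vec7_0, vec7_1, vec7_2, vec7_3, vec7_4, vec7_5, vec7_6] at Ew1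
  have Ew2 := H 1 0
  simp only [g2mat, Matrix.of_apply, vec7_0, vec7_1, vec7_2, vec7_3, vec7_4, vec7_5, vec7_6] at Ew2
  have Eg12 := H 5 4
  simp only [g2mat, Matrix.of_apply, vec7_0, vec7_1, vec7_2, vec7_3, vec7_4, vec7_5, vec7_6] at Eg12
  have Ez1 := H 4 4
  simp only [g2mat, Matrix.of_apply, vec7_0, vec7_1, vec7_2, vec7_3, vec7_4, vec7_5, vec7_6] at Ez1
  have Eg21 := H 4 5
  simp only [g2mat, Matrix.of_apply, vec7_0, vec7_1, vec7_2, vec7_3, vec7_4, vec7_5, vec7_6] at Eg21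
  have Eg01 := H 4 6
  simp only [g2mat, Matrix.of_apply, vec7_0, vec7_1, vec7_2, vec7_3, vec7_4, vec7_5, vec7_6] at Eg01
  have Eg02 := H 0 1
  simp only [g2mat, Matrix.of_apply, vec7_0, vec7_1, vec7_2, vec7_3, vec7_4, vec7_5, vec7_6] at Eg02
  have Egm := H 1 4
  simp only [g2mat, Matrix.of_apply, vec7_0, vec7_1, vec7_2, vec7_3, vec7_4, vec7_5, vec7_6] at Egm
  have Egam1 := H 0 5
  simp only [g2mat, Matrix.of_apply, vec7_0, vec7_1, vec7_2, vec7_3, vec7_4, vec7_5, vec7_6] at Egam1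
  have Egam2 := H 0 4
  simp only [g2mat, Matrix.of_apply, vec7_0, vec7_1, vec7_2, vec7_3, vec7_4, vec7_5, vec7_6] at Egam2
  have Ez2 := H 5 5
  simp only [g2mat, Matrix.of_apply, vec7_0, vec7_1, vec7_2, vec7_3, vec7_4, vec7_5, vec7_6] at Ez2
  exact ⟨Et1, Et2, Ew0, Ew1, Ew2, Eg12, Ez1, by linarith, Eg21, Eg01, Eg02, Egm, Egam1, Egam2⟩

lemma mem_level_m3 {X : Matrix (Fin 7) (Fin 7) ℝ} :
    X ∈ g2Level (-3) ↔ ∃ t1 t2 : ℝ, X = g2mat t1 t2 0 0 0 0 0 0 0 0 0 0 0 0 := by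
  constructor
  · rintro ⟨⟨t1, t2, w0, w1, w2, g12, z1, z2, g21, g01, g02, gm, gam1, gam2, rfl⟩, h2⟩
    rw [D7_comm, g2mat_smul] at h2
    obtain ⟨Et1, Et2, Ew0, Ew1, Ew2, Eg12, Ez1, Ez2, Eg21, Eg01, Eg02, Egm, Egam1, Egam2⟩ := g2mat_inj h2
    push_cast at Et1 Et2 Ew0 Ew1 Ew2 Eg12 Ez1 Ez2 Eg21 Eg01 Eg02 Egm Egam1 Egam2
    exact ⟨t1, t2, by apply g2mat_congr <;> linarith⟩
  · rintro ⟨t1, t2, rfl⟩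
    refine ⟨⟨t1, t2, 0, 0, 0, 0, 0, 0, 0, 0, 0, 0, 0, 0, rfl⟩, ?_⟩
    rw [D7_comm, g2mat_smul]
    apply g2mat_congr <;> push_cast <;> ring

lemma mem_level_m2 {X : Matrix (Fin 7) (Fin 7) ℝ} :
    X ∈ g2Level (-2) ↔ ∃ w0 : ℝ, X = g2mat 0 0 w0 0 0 0 0 0 0 0 0 0 0 0 := by
  constructor
  · rintro ⟨⟨t1, t2, w0, w1, w2, g12, z1, z2, g21, g01, g02, gm, gam1, gam2, rfl⟩, h2⟩
    rw [D7_comm, g2mat_smul] at h2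
    obtain ⟨Et1, Et2, Ew0, Ew1, Ew2, Eg12, Ez1, Ez2, Eg21, Eg01, Eg02, Egm, Egam1, Egam2⟩ := g2mat_inj h2
    push_cast at Et1 Et2 Ew0 Ew1 Ew2 Eg12 Ez1 Ez2 Eg21 Eg01 Eg02 Egm Egam1 Egam2
    exact ⟨w0, by apply g2mat_congr <;> linarith⟩
  · rintro ⟨w0, rfl⟩
    refine ⟨⟨0, 0, w0, 0, 0, 0, 0, 0, 0, 0, 0, 0, 0, 0, rfl⟩, ?_⟩
    rw [D7_comm, g2mat_smul]
    apply g2mat_congr <;> push_cast <;> ring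

lemma mem_level_m1 {X : Matrix (Fin 7) (Fin 7) ℝ} :
    X ∈ g2Level (-1) ↔ ∃ w1 w2 : ℝ, X = g2mat 0 0 0 w1 w2 0 0 0 0 0 0 0 0 0 := by
  constructor
  · rintro ⟨⟨t1, t2, w0, w1, w2, g12, z1, z2, g21, g01, g02, gm, gam1, gam2, rfl⟩, h2⟩
    rw [D7_comm, g2mat_smul] at h2
    obtain ⟨Et1, Et2, Ew0, Ew1, Ew2, Eg12, Ez1, Ez2, Eg21, Eg01, Eg02, Egm, Egam1, Egam2⟩ := g2mat_inj h2
    push_cast at Et1 Et2 Ew0 Ew1 Ew2 Eg12 Ez1 Ez2 Eg21 Eg01 Eg02 Egm Egam1 Egam2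
    exact ⟨w1, w2, by apply g2mat_congr <;> linarith⟩
  · rintro ⟨w1, w2, rfl⟩
    refine ⟨⟨0, 0, 0, w1, w2, 0, 0, 0, 0, 0, 0, 0, 0, 0, rfl⟩, ?_⟩
    rw [D7_comm, g2mat_smul]
    apply g2mat_congr <;> push_cast <;> ring

lemma mem_level_z0 {X : Matrix (Fin 7) (Fin 7) ℝ} :
    X ∈ g2Level 0 ↔ ∃ g12 z1 z2 g21 : ℝ, X = g2mat 0 0 0 0 0 g12 z1 z2 g21 0 0 0 0 0 := by
  constructor
  · rintro ⟨⟨t1, t2, w0, w1, w2, g12, z1, z2, g21, g01, g02, gm, gam1, gam2, rfl⟩, h2⟩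
    rw [D7_comm, g2mat_smul] at h2
    obtain ⟨Et1, Et2, Ew0, Ew1, Ew2, Eg12, Ez1, Ez2, Eg21, Eg01, Eg02, Egm, Egam1, Egam2⟩ := g2mat_inj h2
    push_cast at Et1 Et2 Ew0 Ew1 Ew2 Eg12 Ez1 Ez2 Eg21 Eg01 Eg02 Egm Egam1 Egam2
    exact ⟨g12, z1, z2, g21, by apply g2mat_congr <;> linarith⟩
  · rintro ⟨g12, z1, z2, g21, rfl⟩
    refine ⟨⟨0, 0, 0, 0, 0, g12, z1, z2, g21, 0, 0, 0, 0, 0, rfl⟩, ?_⟩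
    rw [D7_comm, g2mat_smul]
    apply g2mat_congr <;> push_cast <;> ring

lemma mem_level_p1 {X : Matrix (Fin 7) (Fin 7) ℝ} :
    X ∈ g2Level 1 ↔ ∃ g01 g02 : ℝ, X = g2mat 0 0 0 0 0 0 0 0 0 g01 g02 0 0 0 := by
  constructor
  · rintro ⟨⟨t1, t2, w0, w1, w2, g12, z1, z2, g21, g01, g02, gm, gam1, gam2, rfl⟩, h2⟩
    rw [D7_comm, g2mat_smul] at h2
    obtain ⟨Et1, Et2, Ew0, Ew1, Ew2, Eg12, Ez1, Ez2, Eg21, Eg01, Eg02, Egm, Egam1, Egam2⟩ := g2mat_inj h2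
    push_cast at Et1 Et2 Ew0 Ew1 Ew2 Eg12 Ez1 Ez2 Eg21 Eg01 Eg02 Egm Egam1 Egam2
    exact ⟨g01, g02, by apply g2mat_congr <;> linarith⟩
  · rintro ⟨g01, g02, rfl⟩
    refine ⟨⟨0, 0, 0, 0, 0, 0, 0, 0, 0, g01, g02, 0, 0, 0, rfl⟩, ?_⟩
    rw [D7_comm, g2mat_smul]
    apply g2mat_congr <;> push_cast <;> ring

lemma mem_level_p2 {X : Matrix (Fin 7) (Fin 7) ℝ} :
    X ∈ g2Level 2 ↔ ∃ gm : ℝ, X = g2mat 0 0 0 0 0 0 0 0 0 0 0 gm 0 0 := by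
  constructor
  · rintro ⟨⟨t1, t2, w0, w1, w2, g12, z1, z2, g21, g01, g02, gm, gam1, gam2, rfl⟩, h2⟩
    rw [D7_comm, g2mat_smul] at h2
    obtain ⟨Et1, Et2, Ew0, Ew1, Ew2, Eg12, Ez1, Ez2, Eg21, Eg01, Eg02, Egm, Egam1, Egam2⟩ := g2mat_inj h2
    push_cast at Et1 Et2 Ew0 Ew1 Ew2 Eg12 Ez1 Ez2 Eg21 Eg01 Eg02 Egm Egam1 Egam2
    exact ⟨gm, by apply g2mat_congr <;> linarith⟩
  · rintro ⟨gm, rfl⟩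
    refine ⟨⟨0, 0, 0, 0, 0, 0, 0, 0, 0, 0, 0, gm, 0, 0, rfl⟩, ?_⟩
    rw [D7_comm, g2mat_smul]
    apply g2mat_congr <;> push_cast <;> ring

lemma mem_level_p3 {X : Matrix (Fin 7) (Fin 7) ℝ} :
    X ∈ g2Level 3 ↔ ∃ gam1 gam2 : ℝ, X = g2mat 0 0 0 0 0 0 0 0 0 0 0 0 gam1 gam2 := by
  constructor
  · rintro ⟨⟨t1, t2, w0, w1, w2, g12, z1, z2, g21, g01, g02, gm, gam1, gam2, rfl⟩, h2⟩
    rw [D7_comm, g2mat_smul] at h2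
    obtain ⟨Et1, Et2, Ew0, Ew1, Ew2, Eg12, Ez1, Ez2, Eg21, Eg01, Eg02, Egm, Egam1, Egam2⟩ := g2mat_inj h2
    push_cast at Et1 Et2 Ew0 Ew1 Ew2 Eg12 Ez1 Ez2 Eg21 Eg01 Eg02 Egm Egam1 Egam2
    exact ⟨gam1, gam2, by apply g2mat_congr <;> linarith⟩
  · rintro ⟨gam1, gam2, rfl⟩
    refine ⟨⟨0, 0, 0, 0, 0, 0, 0, 0, 0, 0, 0, 0, gam1, gam2, rfl⟩, ?_⟩
    rw [D7_comm, g2mat_smul]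
    apply g2mat_congr <;> push_cast <;> ring

def Lmap_m3 : (Fin 2 → ℝ) →ₗ[ℝ] Matrix (Fin 7) (Fin 7) ℝ where
  toFun c := g2mat (c 0) (c 1) 0 0 0 0 0 0 0 0 0 0 0 0
  map_add' x y := by rw [g2mat_add]; apply g2mat_congr <;> simp
  map_smul' r x := by simp only [RingHom.id_apply]; rw [g2mat_smul]; apply g2mat_congr <;> simp

lemma Lmap_m3_apply (c : Fin 2 → ℝ) : Lmap_m3 c = g2mat (c 0) (c 1) 0 0 0 0 0 0 0 0 0 0 0 0 := rfl

lemma Lmap_m3_inj : Function.Injective Lmap_m3 := by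
  intro x y h
  rw [Lmap_m3_apply, Lmap_m3_apply] at h
  obtain ⟨Et1, Et2, Ew0, Ew1, Ew2, Eg12, Ez1, Ez2, Eg21, Eg01, Eg02, Egm, Egam1, Egam2⟩ := g2mat_inj h
  funext i
  fin_cases i
  · exact Et1
  · exact Et2

lemma Lmap_m3_range : ((LinearMap.range Lmap_m3 : Submodule ℝ (Matrix (Fin 7) (Fin 7) ℝ)) : Set (Matrix (Fin 7) (Fin 7) ℝ)) = g2Level (-3) := by
  ext X
  constructor
  · rintro ⟨c, rfl⟩
    rw [Lmap_m3_apply]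
    exact mem_level_m3.mpr ⟨c 0, c 1, rfl⟩
  · intro hX
    obtain ⟨t1, t2, rfl⟩ := mem_level_m3.mp hX
    refine ⟨![t1, t2], ?_⟩
    rw [Lmap_m3_apply]
    apply g2mat_congr <;> simp

def Lmap_m2 : (Fin 1 → ℝ) →ₗ[ℝ] Matrix (Fin 7) (Fin 7) ℝ where
  toFun c := g2mat 0 0 (c 0) 0 0 0 0 0 0 0 0 0 0 0
  map_add' x y := by rw [g2mat_add]; apply g2mat_congr <;> simp
  map_smul' r x := by simp only [RingHom.id_apply]; rw [g2mat_smul]; apply g2mat_congr <;> simp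

lemma Lmap_m2_apply (c : Fin 1 → ℝ) : Lmap_m2 c = g2mat 0 0 (c 0) 0 0 0 0 0 0 0 0 0 0 0 := rfl

lemma Lmap_m2_inj : Function.Injective Lmap_m2 := by
  intro x y h
  rw [Lmap_m2_apply, Lmap_m2_apply] at h
  obtain ⟨Et1, Et2, Ew0, Ew1, Ew2, Eg12, Ez1, Ez2, Eg21, Eg01, Eg02, Egm, Egam1, Egam2⟩ := g2mat_inj h
  funext i
  fin_cases i
  · exact Ew0

lemma Lmap_m2_range : ((LinearMap.range Lmap_m2 : Submodule ℝ (Matrix (Fin 7) (Fin 7) ℝ)) : Set (Matrix (Fin 7) (Fin 7) ℝ)) = g2Level (-2) := by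
  ext X
  constructor
  · rintro ⟨c, rfl⟩
    rw [Lmap_m2_apply]
    exact mem_level_m2.mpr ⟨c 0, rfl⟩
  · intro hX
    obtain ⟨w0, rfl⟩ := mem_level_m2.mp hX
    refine ⟨![w0], ?_⟩
    rw [Lmap_m2_apply]
    apply g2mat_congr <;> simp

def Lmap_m1 : (Fin 2 → ℝ) →ₗ[ℝ] Matrix (Fin 7) (Fin 7) ℝ where
  toFun c := g2mat 0 0 0 (c 0) (c 1) 0 0 0 0 0 0 0 0 0
  map_add' x y := by rw [g2mat_add]; apply g2mat_congr <;> simp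
  map_smul' r x := by simp only [RingHom.id_apply]; rw [g2mat_smul]; apply g2mat_congr <;> simp

lemma Lmap_m1_apply (c : Fin 2 → ℝ) : Lmap_m1 c = g2mat 0 0 0 (c 0) (c 1) 0 0 0 0 0 0 0 0 0 := rfl

lemma Lmap_m1_inj : Function.Injective Lmap_m1 := by
  intro x y h
  rw [Lmap_m1_apply, Lmap_m1_apply] at h
  obtain ⟨Et1, Et2, Ew0, Ew1, Ew2, Eg12, Ez1, Ez2, Eg21, Eg01, Eg02, Egm, Egam1, Egam2⟩ := g2mat_inj h
  funext i
  fin_cases i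
  · exact Ew1
  · exact Ew2

lemma Lmap_m1_range : ((LinearMap.range Lmap_m1 : Submodule ℝ (Matrix (Fin 7) (Fin 7) ℝ)) : Set (Matrix (Fin 7) (Fin 7) ℝ)) = g2Level (-1) := by
  ext X
  constructor
  · rintro ⟨c, rfl⟩
    rw [Lmap_m1_apply]
    exact mem_level_m1.mpr ⟨c 0, c 1, rfl⟩
  · intro hX
    obtain ⟨w1, w2, rfl⟩ := mem_level_m1.mp hX
    refine ⟨![w1, w2], ?_⟩
    rw [Lmap_m1_apply]
    apply g2mat_congr <;> simp

def Lmap_z0 : (Fin 4 → ℝ) →ₗ[ℝ] Matrix (Fin 7) (Fin 7) ℝ where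
  toFun c := g2mat 0 0 0 0 0 (c 0) (c 1) (c 2) (c 3) 0 0 0 0 0
  map_add' x y := by rw [g2mat_add]; apply g2mat_congr <;> simp
  map_smul' r x := by simp only [RingHom.id_apply]; rw [g2mat_smul]; apply g2mat_congr <;> simp

lemma Lmap_z0_apply (c : Fin 4 → ℝ) : Lmap_z0 c = g2mat 0 0 0 0 0 (c 0) (c 1) (c 2) (c 3) 0 0 0 0 0 := rfl

lemma Lmap_z0_inj : Function.Injective Lmap_z0 := by
  intro x y h
  rw [Lmap_z0_apply, Lmap_z0_apply] at h
  obtain ⟨Et1, Et2, Ew0, Ew1, Ew2, Eg12, Ez1, Ez2, Eg21, Eg01, Eg02, Egm, Egam1, Egam2⟩ := g2mat_inj h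
  funext i
  fin_cases i
  · exact Eg12
  · exact Ez1
  · exact Ez2
  · exact Eg21

lemma Lmap_z0_range : ((LinearMap.range Lmap_z0 : Submodule ℝ (Matrix (Fin 7) (Fin 7) ℝ)) : Set (Matrix (Fin 7) (Fin 7) ℝ)) = g2Level 0 := by
  ext X
  constructor
  · rintro ⟨c, rfl⟩
    rw [Lmap_z0_apply]
    exact mem_level_z0.mpr ⟨c 0, c 1, c 2, c 3, rfl⟩
  · intro hX
    obtain ⟨g12, z1, z2, g21, rfl⟩ := mem_level_z0.mp hX
    refine ⟨![g12, z1, z2, g21], ?_⟩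
    rw [Lmap_z0_apply]
    apply g2mat_congr <;> simp

def Lmap_p1 : (Fin 2 → ℝ) →ₗ[ℝ] Matrix (Fin 7) (Fin 7) ℝ where
  toFun c := g2mat 0 0 0 0 0 0 0 0 0 (c 0) (c 1) 0 0 0
  map_add' x y := by rw [g2mat_add]; apply g2mat_congr <;> simp
  map_smul' r x := by simp only [RingHom.id_apply]; rw [g2mat_smul]; apply g2mat_congr <;> simp

lemma Lmap_p1_apply (c : Fin 2 → ℝ) : Lmap_p1 c = g2mat 0 0 0 0 0 0 0 0 0 (c 0) (c 1) 0 0 0 := rfl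

lemma Lmap_p1_inj : Function.Injective Lmap_p1 := by
  intro x y h
  rw [Lmap_p1_apply, Lmap_p1_apply] at h
  obtain ⟨Et1, Et2, Ew0, Ew1, Ew2, Eg12, Ez1, Ez2, Eg21, Eg01, Eg02, Egm, Egam1, Egam2⟩ := g2mat_inj h
  funext i
  fin_cases i
  · exact Eg01
  · exact Eg02

lemma Lmap_p1_range : ((LinearMap.range Lmap_p1 : Submodule ℝ (Matrix (Fin 7) (Fin 7) ℝ)) : Set (Matrix (Fin 7) (Fin 7) ℝ)) = g2Level 1 := by
  ext X
  constructor
  · rintro ⟨c, rfl⟩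
    rw [Lmap_p1_apply]
    exact mem_level_p1.mpr ⟨c 0, c 1, rfl⟩
  · intro hX
    obtain ⟨g01, g02, rfl⟩ := mem_level_p1.mp hX
    refine ⟨![g01, g02], ?_⟩
    rw [Lmap_p1_apply]
    apply g2mat_congr <;> simp

def Lmap_p2 : (Fin 1 → ℝ) →ₗ[ℝ] Matrix (Fin 7) (Fin 7) ℝ where
  toFun c := g2mat 0 0 0 0 0 0 0 0 0 0 0 (c 0) 0 0
  map_add' x y := by rw [g2mat_add]; apply g2mat_congr <;> simp
  map_smul' r x := by simp only [RingHom.id_apply]; rw [g2mat_smul]; apply g2mat_congr <;> simp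

lemma Lmap_p2_apply (c : Fin 1 → ℝ) : Lmap_p2 c = g2mat 0 0 0 0 0 0 0 0 0 0 0 (c 0) 0 0 := rfl

lemma Lmap_p2_inj : Function.Injective Lmap_p2 := by
  intro x y h
  rw [Lmap_p2_apply, Lmap_p2_apply] at h
  obtain ⟨Et1, Et2, Ew0, Ew1, Ew2, Eg12, Ez1, Ez2, Eg21, Eg01, Eg02, Egm, Egam1, Egam2⟩ := g2mat_inj h
  funext i
  fin_cases i
  · exact Egm

lemma Lmap_p2_range : ((LinearMap.range Lmap_p2 : Submodule ℝ (Matrix (Fin 7) (Fin 7) ℝ)) : Set (Matrix (Fin 7) (Fin 7) ℝ)) = g2Level 2 := by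
  ext X
  constructor
  · rintro ⟨c, rfl⟩
    rw [Lmap_p2_apply]
    exact mem_level_p2.mpr ⟨c 0, rfl⟩
  · intro hX
    obtain ⟨gm, rfl⟩ := mem_level_p2.mp hX
    refine ⟨![gm], ?_⟩
    rw [Lmap_p2_apply]
    apply g2mat_congr <;> simp

def Lmap_p3 : (Fin 2 → ℝ) →ₗ[ℝ] Matrix (Fin 7) (Fin 7) ℝ where
  toFun c := g2mat 0 0 0 0 0 0 0 0 0 0 0 0 (c 0) (c 1)
  map_add' x y := by rw [g2mat_add]; apply g2mat_congr <;> simp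
  map_smul' r x := by simp only [RingHom.id_apply]; rw [g2mat_smul]; apply g2mat_congr <;> simp

lemma Lmap_p3_apply (c : Fin 2 → ℝ) : Lmap_p3 c = g2mat 0 0 0 0 0 0 0 0 0 0 0 0 (c 0) (c 1) := rfl

lemma Lmap_p3_inj : Function.Injective Lmap_p3 := by
  intro x y h
  rw [Lmap_p3_apply, Lmap_p3_apply] at h
  obtain ⟨Et1, Et2, Ew0, Ew1, Ew2, Eg12, Ez1, Ez2, Eg21, Eg01, Eg02, Egm, Egam1, Egam2⟩ := g2mat_inj h
  funext i
  fin_cases i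
  · exact Egam1
  · exact Egam2

lemma Lmap_p3_range : ((LinearMap.range Lmap_p3 : Submodule ℝ (Matrix (Fin 7) (Fin 7) ℝ)) : Set (Matrix (Fin 7) (Fin 7) ℝ)) = g2Level 3 := by
  ext X
  constructor
  · rintro ⟨c, rfl⟩
    rw [Lmap_p3_apply]
    exact mem_level_p3.mpr ⟨c 0, c 1, rfl⟩
  · intro hX
    obtain ⟨gam1, gam2, rfl⟩ := mem_level_p3.mp hX
    refine ⟨![gam1, gam2], ?_⟩
    rw [Lmap_p3_apply]
    apply g2mat_congr <;> simp
lemma key_der (AM BM : Matrix (Fin 7) (Fin 7) ℝ) (r s : ℝ)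
    (hA : D7 * AM - AM * D7 = r • AM) (hB : D7 * BM - BM * D7 = s • BM) :
    D7 * (AM * BM) - (AM * BM) * D7 = (r + s) • (AM * BM) := by
  have hA' : D7 * AM = r • AM + AM * D7 := sub_eq_iff_eq_add.mp hA
  have hB' : D7 * BM = s • BM + BM * D7 := sub_eq_iff_eq_add.mp hB
  calc D7 * (AM * BM) - (AM * BM) * D7
      = (D7 * AM) * BM - AM * (BM * D7) := by rw [mul_assoc AM BM D7, ← mul_assoc D7 AM BM]
    _ = (r • AM + AM * D7) * BM - AM * (BM * D7) := by rw [hA']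
    _ = r • (AM * BM) + AM * (D7 * BM) - AM * (BM * D7) := by
        rw [add_mul, smul_mul_assoc, mul_assoc]
    _ = r • (AM * BM) + AM * (s • BM + BM * D7) - AM * (BM * D7) := by rw [hB']
    _ = (r + s) • (AM * BM) := by rw [mul_add, mul_smul_comm, add_smul]; abel

lemma bracket_grading (p q : ℤ) (X : Matrix (Fin 7) (Fin 7) ℝ) (hX : X ∈ g2Level p)
    (Y : Matrix (Fin 7) (Fin 7) ℝ) (hY : Y ∈ g2Level q) :
    X * Y - Y * X ∈ g2Level (p + q) := by
  obtain ⟨hX1, hX2⟩ := hX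
  obtain ⟨hY1, hY2⟩ := hY
  constructor
  · obtain ⟨x1, x2, x3, x4, x5, x6, x7, x8, x9, x10, x11, x12, x13, x14, rfl⟩ := hX1
    obtain ⟨y1, y2, y3, y4, y5, y6, y7, y8, y9, y10, y11, y12, y13, y14, rfl⟩ := hY1
    exact ⟨_, _, _, _, _, _, _, _, _, _, _, _, _, _,
      g2mat_bracket x1 x2 x3 x4 x5 x6 x7 x8 x9 x10 x11 x12 x13 x14
        y1 y2 y3 y4 y5 y6 y7 y8 y9 y10 y11 y12 y13 y14⟩
  · have k1 := key_der X Y ((p : ℤ) : ℝ) ((q : ℤ) : ℝ) hX2 hY2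
    have k2 := key_der Y X ((q : ℤ) : ℝ) ((p : ℤ) : ℝ) hY2 hX2
    have cast1 : ((p + q : ℤ) : ℝ) = ((p : ℤ) : ℝ) + ((q : ℤ) : ℝ) := by push_cast; ring
    calc D7 * (X * Y - Y * X) - (X * Y - Y * X) * D7
        = (D7 * (X * Y) - (X * Y) * D7) - (D7 * (Y * X) - (Y * X) * D7) := by
          rw [mul_sub, sub_mul]; abel
      _ = (((p : ℤ) : ℝ) + ((q : ℤ) : ℝ)) • (X * Y)
          - (((q : ℤ) : ℝ) + ((p : ℤ) : ℝ)) • (Y * X) := by rw [k1, k2]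
      _ = ((p + q : ℤ) : ℝ) • (X * Y - Y * X) := by
          rw [cast1, add_comm ((q : ℤ) : ℝ) ((p : ℤ) : ℝ), ← smul_sub]

def phi : (Fin 5 → ℝ) →ₗ[ℝ] Matrix (Fin 7) (Fin 7) ℝ where
  toFun v := g2mat (-(v 0)) (-(v 1)) (-(v 2)) (-(v 3)) (-(v 4)) 0 0 0 0 0 0 0 0 0
  map_add' x y := by rw [g2mat_add]; apply g2mat_congr <;> (simp; try ring)
  map_smul' r x := by
    simp only [RingHom.id_apply]; rw [g2mat_smul]; apply g2mat_congr <;> (simp; try ring)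

lemma phi_apply (v : Fin 5 → ℝ) :
    phi v = g2mat (-(v 0)) (-(v 1)) (-(v 2)) (-(v 3)) (-(v 4)) 0 0 0 0 0 0 0 0 0 := rfl

lemma phi_inj : Function.Injective phi := by
  intro u v h
  rw [phi_apply, phi_apply] at h
  obtain ⟨E1, E2, E3, E4, E5, _⟩ := g2mat_inj h
  funext i
  fin_cases i
  · exact neg_inj.mp E1
  · exact neg_inj.mp E2
  · exact neg_inj.mp E3
  · exact neg_inj.mp E4
  · exact neg_inj.mp E5

lemma phi_bracket (x y : Fin 5 → ℝ) : phi (gBr x y) = phi x * phi y - phi y * phi x := by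
  rw [phi_apply, phi_apply, phi_apply, g2mat_bracket]
  apply g2mat_congr <;> (try simp only [gBr, vec5_0, vec5_1, vec5_2, vec5_3, vec5_4]) <;> ring

lemma phi_single_0 : phi (Pi.single (0 : Fin 5) (1 : ℝ)) ∈ g2Level (-3) := by
  have h : phi (Pi.single (0 : Fin 5) (1 : ℝ)) = g2mat (-1) (0) (0) (0) (0) (0) (0) (0) (0) (0) (0) (0) (0) (0) := by
    rw [phi_apply]; apply g2mat_congr <;> simp [Pi.single_apply]
  rw [h]
  exact mem_level_m3.mpr ⟨(-1), 0, rfl⟩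

lemma phi_single_1 : phi (Pi.single (1 : Fin 5) (1 : ℝ)) ∈ g2Level (-3) := by
  have h : phi (Pi.single (1 : Fin 5) (1 : ℝ)) = g2mat (0) (-1) (0) (0) (0) (0) (0) (0) (0) (0) (0) (0) (0) (0) := by
    rw [phi_apply]; apply g2mat_congr <;> simp [Pi.single_apply]
  rw [h]
  exact mem_level_m3.mpr ⟨0, (-1), rfl⟩

lemma phi_single_2 : phi (Pi.single (2 : Fin 5) (1 : ℝ)) ∈ g2Level (-2) := by
  have h : phi (Pi.single (2 : Fin 5) (1 : ℝ)) = g2mat (0) (0) (-1) (0) (0) (0) (0) (0) (0) (0) (0) (0) (0) (0) := by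
    rw [phi_apply]; apply g2mat_congr <;> simp [Pi.single_apply]
  rw [h]
  exact mem_level_m2.mpr ⟨(-1), rfl⟩

lemma phi_single_3 : phi (Pi.single (3 : Fin 5) (1 : ℝ)) ∈ g2Level (-1) := by
  have h : phi (Pi.single (3 : Fin 5) (1 : ℝ)) = g2mat (0) (0) (0) (-1) (0) (0) (0) (0) (0) (0) (0) (0) (0) (0) := by
    rw [phi_apply]; apply g2mat_congr <;> simp [Pi.single_apply]
  rw [h]
  exact mem_level_m1.mpr ⟨(-1), 0, rfl⟩

lemma phi_single_4 : phi (Pi.single (4 : Fin 5) (1 : ℝ)) ∈ g2Level (-1) := by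
  have h : phi (Pi.single (4 : Fin 5) (1 : ℝ)) = g2mat (0) (0) (0) (0) (-1) (0) (0) (0) (0) (0) (0) (0) (0) (0) := by
    rw [phi_apply]; apply g2mat_congr <;> simp [Pi.single_apply]
  rw [h]
  exact mem_level_m1.mpr ⟨0, (-1), rfl⟩
/-- The grading `g₂ = g₋₃ ⊕ g₋₂ ⊕ g₋₁ ⊕ g₀ ⊕ g₁ ⊕ g₂ ⊕ g₃` induced by `D₇`, with graded
dimensions `(2,1,2,4,2,1,2)`, and the graded isomorphism of the negative part with `g₋`. -/
theorem g2_grading_and_negative_part :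
    -- every element of g₂ decomposes into graded components
    (∀ X ∈ g2Set, ∃ a ∈ g2Level (-3), ∃ b ∈ g2Level (-2), ∃ c ∈ g2Level (-1),
      ∃ d ∈ g2Level 0, ∃ e ∈ g2Level 1, ∃ f ∈ g2Level 2, ∃ g ∈ g2Level 3,
      X = a + b + c + d + e + f + g) ∧
    -- the decomposition is direct (unique)
    (∀ a ∈ g2Level (-3), ∀ b ∈ g2Level (-2), ∀ c ∈ g2Level (-1), ∀ d ∈ g2Level 0,
      ∀ e ∈ g2Level 1, ∀ f ∈ g2Level 2, ∀ g ∈ g2Level 3,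
      a + b + c + d + e + f + g = 0 →
      a = 0 ∧ b = 0 ∧ c = 0 ∧ d = 0 ∧ e = 0 ∧ f = 0 ∧ g = 0) ∧
    -- dimensions of the graded pieces
    (∃ S : Submodule ℝ (Matrix (Fin 7) (Fin 7) ℝ),
      (S : Set _) = g2Level (-3) ∧ finrank ℝ ↥S = 2) ∧
    (∃ S : Submodule ℝ (Matrix (Fin 7) (Fin 7) ℝ),
      (S : Set _) = g2Level (-2) ∧ finrank ℝ ↥S = 1) ∧
    (∃ S : Submodule ℝ (Matrix (Fin 7) (Fin 7) ℝ),
      (S : Set _) = g2Level (-1) ∧ finrank ℝ ↥S = 2) ∧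
    (∃ S : Submodule ℝ (Matrix (Fin 7) (Fin 7) ℝ),
      (S : Set _) = g2Level 0 ∧ finrank ℝ ↥S = 4) ∧
    (∃ S : Submodule ℝ (Matrix (Fin 7) (Fin 7) ℝ),
      (S : Set _) = g2Level 1 ∧ finrank ℝ ↥S = 2) ∧
    (∃ S : Submodule ℝ (Matrix (Fin 7) (Fin 7) ℝ),
      (S : Set _) = g2Level 2 ∧ finrank ℝ ↥S = 1) ∧
    (∃ S : Submodule ℝ (Matrix (Fin 7) (Fin 7) ℝ),
      (S : Set _) = g2Level 3 ∧ finrank ℝ ↥S = 2) ∧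
    -- the bracket respects the grading: [g_p, g_q] ⊆ g_{p+q}
    (∀ p q : ℤ, ∀ X ∈ g2Level p, ∀ Y ∈ g2Level q, X * Y - Y * X ∈ g2Level (p + q)) ∧
    -- the negative part g₋₃ ⊕ g₋₂ ⊕ g₋₁ is isomorphic as a graded Lie algebra to g₋
    (∃ φ : (Fin 5 → ℝ) →ₗ[ℝ] Matrix (Fin 7) (Fin 7) ℝ,
      Function.Injective φ ∧
      (∀ x y, φ (gBr x y) = φ x * φ y - φ y * φ x) ∧
      φ (Pi.single 0 1) ∈ g2Level (-3) ∧ φ (Pi.single 1 1) ∈ g2Level (-3) ∧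
      φ (Pi.single 2 1) ∈ g2Level (-2) ∧
      φ (Pi.single 3 1) ∈ g2Level (-1) ∧ φ (Pi.single 4 1) ∈ g2Level (-1) ∧
      (∀ v, ∃ a ∈ g2Level (-3), ∃ b ∈ g2Level (-2), ∃ c ∈ g2Level (-1),
        φ v = a + b + c) ∧
      (∀ X, (∃ a ∈ g2Level (-3), ∃ b ∈ g2Level (-2), ∃ c ∈ g2Level (-1),
        X = a + b + c) → ∃ v, φ v = X)) := by
  refine ⟨?_, ?_, ?_, ?_, ?_, ?_, ?_, ?_, ?_, ?_, ?_⟩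
  · rintro X ⟨t1, t2, w0, w1, w2, g12, z1, z2, g21, g01, g02, gm, gam1, gam2, rfl⟩
    refine ⟨g2mat t1 t2 0 0 0 0 0 0 0 0 0 0 0 0, mem_level_m3.mpr ⟨t1, t2, rfl⟩,
      g2mat 0 0 w0 0 0 0 0 0 0 0 0 0 0 0, mem_level_m2.mpr ⟨w0, rfl⟩,
      g2mat 0 0 0 w1 w2 0 0 0 0 0 0 0 0 0, mem_level_m1.mpr ⟨w1, w2, rfl⟩,
      g2mat 0 0 0 0 0 g12 z1 z2 g21 0 0 0 0 0, mem_level_z0.mpr ⟨g12, z1, z2, g21, rfl⟩,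
      g2mat 0 0 0 0 0 0 0 0 0 g01 g02 0 0 0, mem_level_p1.mpr ⟨g01, g02, rfl⟩,
      g2mat 0 0 0 0 0 0 0 0 0 0 0 gm 0 0, mem_level_p2.mpr ⟨gm, rfl⟩,
      g2mat 0 0 0 0 0 0 0 0 0 0 0 0 gam1 gam2, mem_level_p3.mpr ⟨gam1, gam2, rfl⟩, ?_⟩
    rw [g2mat_add, g2mat_add, g2mat_add, g2mat_add, g2mat_add, g2mat_add]
    apply g2mat_congr <;> ring
  · intro a ha b hb c hc d hd e he f hf g hg hsum
    obtain ⟨t1, t2, rfl⟩ := mem_level_m3.mp ha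
    obtain ⟨w0, rfl⟩ := mem_level_m2.mp hb
    obtain ⟨w1, w2, rfl⟩ := mem_level_m1.mp hc
    obtain ⟨g12, z1, z2, g21, rfl⟩ := mem_level_z0.mp hd
    obtain ⟨g01, g02, rfl⟩ := mem_level_p1.mp he
    obtain ⟨gm, rfl⟩ := mem_level_p2.mp hf
    obtain ⟨gam1, gam2, rfl⟩ := mem_level_p3.mp hg
    rw [g2mat_add, g2mat_add, g2mat_add, g2mat_add, g2mat_add, g2mat_add,
      ← g2mat_zero] at hsum
    obtain ⟨E1, E2, E3, E4, E5, E6, E7, E8, E9, E10, E11, E12, E13, E14⟩ := g2mat_inj hsum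
    refine ⟨?_, ?_, ?_, ?_, ?_, ?_, ?_⟩ <;> rw [← g2mat_zero] <;>
      apply g2mat_congr <;> linarith
  · exact ⟨LinearMap.range Lmap_m3, Lmap_m3_range, by
      rw [LinearMap.finrank_range_of_inj Lmap_m3_inj]; exact Module.finrank_fin_fun ℝ⟩
  · exact ⟨LinearMap.range Lmap_m2, Lmap_m2_range, by
      rw [LinearMap.finrank_range_of_inj Lmap_m2_inj]; exact Module.finrank_fin_fun ℝ⟩
  · exact ⟨LinearMap.range Lmap_m1, Lmap_m1_range, by
      rw [LinearMap.finrank_range_of_inj Lmap_m1_inj]; exact Module.finrank_fin_fun ℝ⟩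
  · exact ⟨LinearMap.range Lmap_z0, Lmap_z0_range, by
      rw [LinearMap.finrank_range_of_inj Lmap_z0_inj]; exact Module.finrank_fin_fun ℝ⟩
  · exact ⟨LinearMap.range Lmap_p1, Lmap_p1_range, by
      rw [LinearMap.finrank_range_of_inj Lmap_p1_inj]; exact Module.finrank_fin_fun ℝ⟩
  · exact ⟨LinearMap.range Lmap_p2, Lmap_p2_range, by
      rw [LinearMap.finrank_range_of_inj Lmap_p2_inj]; exact Module.finrank_fin_fun ℝ⟩
  · exact ⟨LinearMap.range Lmap_p3, Lmap_p3_range, by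
      rw [LinearMap.finrank_range_of_inj Lmap_p3_inj]; exact Module.finrank_fin_fun ℝ⟩
  · exact bracket_grading
  · refine ⟨phi, phi_inj, phi_bracket, phi_single_0, phi_single_1, phi_single_2,
      phi_single_3, phi_single_4, ?_, ?_⟩
    · intro v
      refine ⟨g2mat (-(v 0)) (-(v 1)) 0 0 0 0 0 0 0 0 0 0 0 0,
        mem_level_m3.mpr ⟨_, _, rfl⟩,
        g2mat 0 0 (-(v 2)) 0 0 0 0 0 0 0 0 0 0 0, mem_level_m2.mpr ⟨_, rfl⟩,
        g2mat 0 0 0 (-(v 3)) (-(v 4)) 0 0 0 0 0 0 0 0 0,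
        mem_level_m1.mpr ⟨_, _, rfl⟩, ?_⟩
      rw [phi_apply, g2mat_add, g2mat_add]
      apply g2mat_congr <;> ring
    · rintro X ⟨a, ha, b, hb, c, hc, rfl⟩
      obtain ⟨t1, t2, rfl⟩ := mem_level_m3.mp ha
      obtain ⟨w0, rfl⟩ := mem_level_m2.mp hb
      obtain ⟨w1, w2, rfl⟩ := mem_level_m1.mp hc
      refine ⟨![-t1, -t2, -w0, -w1, -w2], ?_⟩
      rw [phi_apply, g2mat_add, g2mat_add]
      apply g2mat_congr <;>
        (try simp only [vec5_0, vec5_1, vec5_2, vec5_3, vec5_4]) <;> ring
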